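/- Let q be an odd prime power, d a non-square in F_q*, α in F_{q^2} with α² = d, Q = {γ in F_{q^2} : γ^{q+1} = 1}, Q₀ = {γ² : γ in Q}, and Q₁ = Q \ Q₀. If q ≡ 1 (mod 4), then in the Paley graph P(q²) the set ψ(α·Q₁) is a clique, α ∉ ψ(α·Q₁), and α is adjacent to no element of ψ(α·Q₁); i.e., ψ(α·Q₁ ∪ {α}) induces the disjoint union of the clique ψ(α·Q₁) and the isolated vertex α. If q ≡ 3 (mod 4), then ψ(α·Q₁) is a clique in P(q²), the vertices α and −α are adjacent, and no element of ψ(α·Q₁) is adjacent to α or to −α; i.e., ψ(α·Q₁ ∪ {0, α}) induces the disjoint union of the clique ψ(α·Q₁) and the edge {α, −α}. -/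

import Mathlib

/-!
Write `q = 2m + 1`. As `|F| = q²`, a nonzero `z ∈ F` is a square iff its norm `z^q · z` has
`m`-th power `1`; the Frobenius `z ↦ z^q` fixes `K` and sends `α` to `-α`, because `d^m = -1`.
For `σ ∈ Q₁` one has `σ^(m+1) = -1`, and `x = ψ(ασ) = α(σ+1)/(σ-1)` is Frobenius-fixed, so
differences of such points are squares. Both `α - x` and `-α - x` have norm
`x² - d = 4dσ/(σ-1)²`, whose `m`-th power is `-1`. Finally `α - (-α) = 2α` has norm `-4d`,
whose `m`-th power `(-1)^(m+1)` is `1` exactly when `q ≡ 3 (mod 4)`.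
-/

/-- A clique in the Paley graph P(q^2): any two distinct elements differ by a square. -/
def paleyClique {F : Type*} [Field F] (C : Set F) : Prop :=
  ∀ x ∈ C, ∀ y ∈ C, x ≠ y → IsSquare (x - y)

open FiniteField

theorem FiniteField.ringChar_ne_two_of_odd_card {K : Type*} [Field K] [Fintype K]
    (h : Odd (Fintype.card K)) : ringChar K ≠ 2 := fun h2 =>
  Nat.not_even_iff_odd.mpr h (Nat.even_iff.mpr (even_card_iff_char_two.mp h2))

theorem FiniteField.pow_card_div_two_eq_neg_one {K : Type*} [Field K] [Fintype K]
    (hK : ringChar K ≠ 2) {a : K} (ha : ¬IsSquare a) : a ^ (Fintype.card K / 2) = -1 := by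
  have ha0 : a ≠ 0 := by rintro rfl; exact ha ⟨0, by simp⟩
  exact (pow_dichotomy hK ha0).resolve_left fun h => ha ((isSquare_iff hK ha0).mpr h)

theorem pow_two_mul_eq_one_of_pow_eq_self {G₀ : Type*} [GroupWithZero G₀] {z : G₀} {m : ℕ}
    (hz : z ≠ 0) (h : z ^ (2 * m + 1) = z) : z ^ (2 * m) = 1 := by
  rwa [pow_succ, mul_eq_right₀ hz] at h

theorem pow_two_mul_add_one_eq_inv {R : Type*} [DivisionRing R] {σ : R} {m : ℕ}
    (hσ : σ ^ (m + 1) = -1) : σ ^ (2 * m + 1) = σ⁻¹ := by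
  refine eq_inv_of_mul_eq_one_left ?_
  rw [← pow_succ, show 2 * m + 1 + 1 = (m + 1) * 2 by ring, pow_mul, hσ, neg_one_sq]

/-- For `σ` on the norm-one circle this is the point `ψ(ασ)`. -/
def cayley {F : Type*} [Field F] (α σ : F) : F := α * (σ + 1) / (σ - 1)

theorem apply_mul_eq_cayley {F : Type*} [Field F] {ψ : F → F} {d α σ : F}
    (hψ : ∀ γ : F, γ ≠ α → ψ γ = (α * γ + d) / (γ - α)) (hα : α ^ 2 = d) (hα0 : α ≠ 0)
    (hσ1 : σ ≠ 1) : ψ (α * σ) = cayley α σ := by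
  have hσ1' : σ - 1 ≠ 0 := sub_ne_zero.mpr hσ1
  rw [hψ _ (by simpa [hα0] using hσ1), cayley, ← hα]
  field_simp

section Subfield

variable {F : Type*} [Field F] (K : Subfield F) [Fintype K] {m : ℕ}

theorem Subfield.add_pow_card (x y : F) :
    (x + y) ^ Fintype.card K = x ^ Fintype.card K + y ^ Fintype.card K :=
  map_add (frobeniusAlgHom K F) x y

theorem Subfield.sub_pow_card (x y : F) :
    (x - y) ^ Fintype.card K = x ^ Fintype.card K - y ^ Fintype.card K :=
  map_sub (frobeniusAlgHom K F) x y

theorem Subfield.pow_card_of_mem {x : F} (hx : x ∈ K) : x ^ Fintype.card K = x :=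
  (frobeniusAlgHom K F).commutes ⟨x, hx⟩

theorem Subfield.pow_eq_neg_one_of_not_exists_mul_self (hK : Fintype.card K = 2 * m + 1)
    {d : F} (hdK : d ∈ K) (hdns : ¬∃ c ∈ K, c * c = d) : d ^ m = -1 := by
  have hns : ¬IsSquare (⟨d, hdK⟩ : K) := by
    rintro ⟨c, hc⟩
    exact hdns ⟨c, c.2, congrArg Subtype.val hc.symm⟩
  have h := pow_card_div_two_eq_neg_one
    (ringChar_ne_two_of_odd_card (hK ▸ odd_two_mul_add_one m)) hns
  rw [hK, show (2 * m + 1) / 2 = m by omega] at h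
  simpa using congrArg Subtype.val h

theorem cayley_pow_eq_self (hK : Fintype.card K = 2 * m + 1) {α σ : F}
    (hα : α ^ (2 * m + 1) = -α) (hσ : σ ^ (m + 1) = -1) :
    cayley α σ ^ (2 * m + 1) = cayley α σ := by
  have hσ0 : σ ≠ 0 := by rintro rfl; simp at hσ
  rcases eq_or_ne σ 1 with rfl | hσ1
  · simp [cayley]
  have hσ1' : σ - 1 ≠ 0 := sub_ne_zero.mpr hσ1
  have hσ1'' : 1 - σ ≠ 0 := sub_ne_zero.mpr hσ1.symm
  rw [cayley, div_pow, mul_pow, ← hK, Subfield.add_pow_card, Subfield.sub_pow_card, one_pow, hK,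
    hα, pow_two_mul_add_one_eq_inv hσ]
  field_simp
  ring

end Subfield

section QuadraticExtension

variable {F : Type*} [Field F] [Fintype F] {m : ℕ}

theorem ringChar_ne_two_of_card_eq_sq (hF : Fintype.card F = (2 * m + 1) ^ 2) :
    ringChar F ≠ 2 :=
  ringChar_ne_two_of_odd_card (hF ▸ (odd_two_mul_add_one m).pow)

theorem isSquare_iff_norm_pow_eq_one (hF : Fintype.card F = (2 * m + 1) ^ 2) {z : F}
    (hz : z ≠ 0) : IsSquare z ↔ (z ^ (2 * m + 1) * z) ^ m = 1 := by
  have hcard : Fintype.card F / 2 = (2 * m + 1 + 1) * m := by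
    rw [hF, show (2 * m + 1) ^ 2 = 2 * ((2 * m + 1 + 1) * m) + 1 by ring]
    omega
  rw [isSquare_iff (ringChar_ne_two_of_card_eq_sq hF) hz, hcard, pow_mul, pow_succ]

theorem not_isSquare_of_norm_pow_eq_neg_one (hF : Fintype.card F = (2 * m + 1) ^ 2) {z : F}
    (h : (z ^ (2 * m + 1) * z) ^ m = -1) : ¬IsSquare z := by
  have hne := Ring.neg_one_ne_one_of_char_ne_two (ringChar_ne_two_of_card_eq_sq hF)
  rcases eq_or_ne z 0 with rfl | hz
  · rcases m.eq_zero_or_pos with rfl | hm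
    · exact absurd h.symm (by simpa using hne)
    · simp [zero_pow hm.ne'] at h
  · rw [isSquare_iff_norm_pow_eq_one hF hz, h]
    exact hne

theorem isSquare_of_pow_eq_self (hF : Fintype.card F = (2 * m + 1) ^ 2) {z : F} (hz : z ≠ 0)
    (h : z ^ (2 * m + 1) = z) : IsSquare z := by
  rw [isSquare_iff_norm_pow_eq_one hF hz, h, ← sq, ← pow_mul,
    pow_two_mul_eq_one_of_pow_eq_self hz h]

theorem pow_succ_eq_neg_one_of_notMem_sq (hF : Fintype.card F = (2 * m + 1) ^ 2) {σ : F}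
    (hσ : σ ^ (2 * m + 1 + 1) = 1)
    (hσ₀ : σ ∉ (· ^ 2) '' {γ : F | γ ^ (2 * m + 1 + 1) = 1}) : σ ^ (m + 1) = -1 := by
  have hexp : 2 * m + 1 + 1 = 2 * (m + 1) := by ring
  refine (mul_self_eq_one_iff.mp ?_).resolve_left fun h => hσ₀ ?_
  · rwa [← pow_add, ← two_mul, ← hexp]
  · have hσ0 : σ ≠ 0 := by rintro rfl; simp at hσ
    obtain ⟨τ, rfl⟩ :=
      (isSquare_iff_norm_pow_eq_one hF hσ0).mpr (by rw [← pow_succ, hσ, one_pow])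
    refine ⟨τ, ?_, sq τ⟩
    show τ ^ (2 * m + 1 + 1) = 1
    rwa [hexp, pow_mul, sq]

variable (K : Subfield F) [Fintype K]

theorem Subfield.four_pow_eq_one (hF : Fintype.card F = (2 * m + 1) ^ 2)
    (hK : Fintype.card K = 2 * m + 1) : (4 : F) ^ m = 1 := by
  have h2 := Subfield.pow_card_of_mem K (ofNat_mem K 2)
  rw [hK] at h2
  rw [show (4 : F) = 2 ^ 2 by norm_num, ← pow_mul, pow_two_mul_eq_one_of_pow_eq_self
    (Ring.two_ne_zero (ringChar_ne_two_of_card_eq_sq hF)) h2]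

theorem cayley_sq_sub_pow_eq_neg_one (hF : Fintype.card F = (2 * m + 1) ^ 2)
    (hK : Fintype.card K = 2 * m + 1) {d α σ : F} (hd : d ^ m = -1) (hα : α ^ 2 = d)
    (hσ : σ ^ (m + 1) = -1) : (cayley α σ ^ 2 - d) ^ m = -1 := by
  have hσ0 : σ ≠ 0 := by rintro rfl; simp at hσ
  have hσ1 : σ - 1 ≠ 0 := by
    rintro h
    rw [sub_eq_zero.mp h, one_pow] at hσ
    exact Ring.neg_one_ne_one_of_char_ne_two (ringChar_ne_two_of_card_eq_sq hF) hσ.symm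
  have hσm : σ ^ m = -σ⁻¹ := by
    field_simp
    rw [← pow_succ, hσ]
  have hσ1m : (σ - 1) ^ (2 * m) = -σ⁻¹ := by
    apply mul_right_cancel₀ hσ1
    rw [← pow_succ, ← hK, Subfield.sub_pow_card, one_pow, hK, pow_two_mul_add_one_eq_inv hσ]
    field_simp
    ring
  have hx : cayley α σ ^ 2 - d = 4 * d * σ / (σ - 1) ^ 2 := by
    rw [cayley, ← hα]
    field_simp
    ring
  rw [hx, div_pow, mul_pow, mul_pow, Subfield.four_pow_eq_one K hF hK, hd, hσm, ← pow_mul, hσ1m]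
  field_simp

theorem isSquare_sub_of_pow_eq_self (hF : Fintype.card F = (2 * m + 1) ^ 2)
    (hK : Fintype.card K = 2 * m + 1) {x y : F} (hx : x ^ (2 * m + 1) = x)
    (hy : y ^ (2 * m + 1) = y) (hxy : x ≠ y) : IsSquare (x - y) :=
  isSquare_of_pow_eq_self hF (sub_ne_zero.mpr hxy)
    (by rw [← hK, Subfield.sub_pow_card, hK, hx, hy])

theorem not_isSquare_sub_of_pow_eq_self (hF : Fintype.card F = (2 * m + 1) ^ 2)
    (hK : Fintype.card K = 2 * m + 1) {d α x : F} (hα : α ^ 2 = d)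
    (hαq : α ^ (2 * m + 1) = -α) (hx : x ^ (2 * m + 1) = x) (hxd : (x ^ 2 - d) ^ m = -1) :
    ¬IsSquare (α - x) ∧ ¬IsSquare (-α - x) := by
  have hnorm : ∀ β : F, β ^ (2 * m + 1) = -β → β ^ 2 = d →
      (β - x) ^ (2 * m + 1) * (β - x) = x ^ 2 - d := by
    intro β hβq hβ
    rw [← hK, Subfield.sub_pow_card, hK, hβq, hx]
    linear_combination -hβ
  refine ⟨not_isSquare_of_norm_pow_eq_neg_one hF ?_, not_isSquare_of_norm_pow_eq_neg_one hF ?_⟩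
  · rw [hnorm α hαq hα, hxd]
  · rw [hnorm (-α) (by rw [Odd.neg_pow (odd_two_mul_add_one m), hαq]) (by rw [neg_sq, hα]), hxd]

theorem isSquare_two_mul_of_odd (hF : Fintype.card F = (2 * m + 1) ^ 2)
    (hK : Fintype.card K = 2 * m + 1) (hm : Odd m) {d α : F} (hd : d ^ m = -1)
    (hα : α ^ 2 = d) (hαq : α ^ (2 * m + 1) = -α) (hα0 : α ≠ 0) : IsSquare (2 * α) := by
  have h2 : (2 : F) ≠ 0 := Ring.two_ne_zero (ringChar_ne_two_of_card_eq_sq hF)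
  have hnorm : (2 * α) ^ (2 * m + 1) * (2 * α) = -1 * 4 * d := by
    rw [mul_pow, ← hK, Subfield.pow_card_of_mem K (ofNat_mem K 2), hK, hαq]
    linear_combination -4 * hα
  rw [isSquare_iff_norm_pow_eq_one hF (mul_ne_zero h2 hα0), hnorm, mul_pow, mul_pow,
    hm.neg_one_pow, Subfield.four_pow_eq_one K hF hK, hd]
  norm_num

end QuadraticExtension

theorem stmt_19_general (q : ℕ) (hq : Odd q)
    (F : Type*) [Field F] (hF : Nat.card F = q ^ 2)
    (K : Subfield F) (hK : Nat.card K = q)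
    (d : F) (hdK : d ∈ K) (hd0 : d ≠ 0) (hdns : ¬ ∃ c ∈ K, c * c = d)
    (α : F) (hα : α ^ 2 = d)
    (ψ : F → F) (hψ : ∀ γ : F, γ ≠ α → ψ γ = (α * γ + d) / (γ - α))
    (Q Q₀ Q₁ : Set F) (hQ : Q = {γ : F | γ ^ (q + 1) = 1})
    (hQ₀ : Q₀ = (fun γ => γ ^ 2) '' Q) (hQ₁ : Q₁ = Q \ Q₀) :
    (q % 4 = 1 →
      paleyClique (ψ '' ((fun x => α * x) '' Q₁)) ∧
      α ∉ ψ '' ((fun x => α * x) '' Q₁) ∧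
      ∀ x ∈ ψ '' ((fun x => α * x) '' Q₁), ¬ IsSquare (α - x)) ∧
    (q % 4 = 3 →
      paleyClique (ψ '' ((fun x => α * x) '' Q₁)) ∧
      α ≠ -α ∧ IsSquare (α - (-α)) ∧
      α ∉ ψ '' ((fun x => α * x) '' Q₁) ∧ -α ∉ ψ '' ((fun x => α * x) '' Q₁) ∧
      ∀ x ∈ ψ '' ((fun x => α * x) '' Q₁),
        ¬ IsSquare (α - x) ∧ ¬ IsSquare (-α - x)) := by
  obtain ⟨m, rfl⟩ := hq
  have : Finite F := Nat.finite_of_card_ne_zero (by rw [hF]; positivity)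
  let _ : Fintype F := Fintype.ofFinite F
  let _ : Fintype K := Fintype.ofFinite K
  rw [Nat.card_eq_fintype_card] at hF hK
  have hα0 : α ≠ 0 := by rintro rfl; exact hd0 (by rw [← hα]; ring)
  have hdm := Subfield.pow_eq_neg_one_of_not_exists_mul_self K hK hdK hdns
  have hαq : α ^ (2 * m + 1) = -α := by rw [pow_succ, pow_mul, hα, hdm, neg_one_mul]
  set S := ψ '' ((fun x => α * x) '' Q₁)
  have hS : ∀ x ∈ S, x ^ (2 * m + 1) = x ∧ (x ^ 2 - d) ^ m = -1 := by
    subst hQ₁ hQ₀ hQ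
    rintro _ ⟨_, ⟨σ, ⟨hσ, hσ₀⟩, rfl⟩, rfl⟩
    have hσm := pow_succ_eq_neg_one_of_notMem_sq hF hσ hσ₀
    have hσ1 : σ ≠ 1 := by rintro rfl; exact hσ₀ ⟨1, by simp, by simp⟩
    rw [apply_mul_eq_cayley hψ hα hα0 hσ1]
    exact ⟨cayley_pow_eq_self K hK hαq hσm, cayley_sq_sub_pow_eq_neg_one K hF hK hdm hα hσm⟩
  have hnonadj (x) (hx : x ∈ S) : ¬IsSquare (α - x) ∧ ¬IsSquare (-α - x) :=
    not_isSquare_sub_of_pow_eq_self K hF hK hα hαq (hS x hx).1 (hS x hx).2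
  have hclique : paleyClique S := fun x hx y hy =>
    isSquare_sub_of_pow_eq_self K hF hK (hS x hx).1 (hS y hy).1
  have hα_notMem : α ∉ S := fun h => (hnonadj α h).1 ⟨0, by simp⟩
  have hnegα_notMem : -α ∉ S := fun h => (hnonadj (-α) h).2 ⟨0, by simp⟩
  refine ⟨fun _ => ⟨hclique, hα_notMem, fun x hx => (hnonadj x hx).1⟩,
    fun h3 => ⟨hclique, ?_, ?_, hα_notMem, hnegα_notMem, hnonadj⟩⟩
  · exact fun h => hα0 ((Ring.eq_self_iff_eq_zero_of_char_ne_two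
      (ringChar_ne_two_of_card_eq_sq hF)).mp h.symm)
  · rw [sub_neg_eq_add, ← two_mul]
    exact isSquare_two_mul_of_odd K hF hK (Nat.odd_iff.mpr (by omega)) hdm hα hαq hα0

/-- if q ≡ 1 (mod 4), then ψ(α·Q₁ ∪ {α}) induces the disjoint union
of the clique ψ(α·Q₁) and the isolated vertex α in P(q²); if q ≡ 3 (mod 4), then
ψ(α·Q₁ ∪ {0, α}) induces the disjoint union of the clique ψ(α·Q₁) and the edge
{α, −α}. -/
theorem stmt_19 (q : ℕ) (hq : Odd q) (hq' : IsPrimePow q)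
    (F : Type*) [Field F] (hF : Nat.card F = q ^ 2)
    (K : Subfield F) (hK : Nat.card K = q)
    (d : F) (hdK : d ∈ K) (hd0 : d ≠ 0) (hdns : ¬ ∃ c ∈ K, c * c = d)
    (α : F) (hα : α ^ 2 = d)
    (ψ : F → F) (hψ : ∀ γ : F, γ ≠ α → ψ γ = (α * γ + d) / (γ - α)) (hψα : ψ α = α)
    (Q Q₀ Q₁ : Set F) (hQ : Q = {γ : F | γ ^ (q + 1) = 1})
    (hQ₀ : Q₀ = (fun γ => γ ^ 2) '' Q) (hQ₁ : Q₁ = Q \ Q₀) :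
    (q % 4 = 1 →
      paleyClique (ψ '' ((fun x => α * x) '' Q₁)) ∧
      α ∉ ψ '' ((fun x => α * x) '' Q₁) ∧
      ∀ x ∈ ψ '' ((fun x => α * x) '' Q₁), ¬ IsSquare (α - x)) ∧
    (q % 4 = 3 →
      paleyClique (ψ '' ((fun x => α * x) '' Q₁)) ∧
      α ≠ -α ∧ IsSquare (α - (-α)) ∧
      α ∉ ψ '' ((fun x => α * x) '' Q₁) ∧ -α ∉ ψ '' ((fun x => α * x) '' Q₁) ∧
      ∀ x ∈ ψ '' ((fun x => α * x) '' Q₁),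
        ¬ IsSquare (α - x) ∧ ¬ IsSquare (-α - x)) :=
  stmt_19_general q hq F hF K hK d hdK hd0 hdns α hα ψ hψ Q Q₀ Q₁ hQ hQ₀ hQ₁
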